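/- arXiv:2107.04662 — 4 statements merged into one kernel-verified Lean document; each statement's English description precedes it below -/
import Mathlib

section
/- The closed unit interval [0,1] is not a Δ-space. -/
def IsDeltaSpace (X : Type*) [TopologicalSpace X] : Prop :=
  ∀ D : ℕ → Set X, (∀ n, D (n + 1) ⊆ D n) → (⋂ n, D n) = ∅ →
    ∃ V : ℕ → Set X, (∀ n, IsOpen (V n)) ∧ (∀ n, V (n + 1) ⊆ V n) ∧
      (⋂ n, V n) = ∅ ∧ ∀ n, D n ⊆ V n

/-!
Enumerate a countable dense set as `u 0, u 1, …` and let `D n` be its set of values minus the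
first `n` of them. The `D n` decrease to `∅`, yet each is dense, since a finite set of
non-isolated points is removed. Open sets `V n ⊇ D n` would therefore be dense, and in a Baire
space their intersection cannot be empty.
-/

open Set Filter Topology

namespace Set

variable {α : Type*}

/-- Removing the earlier values, rather than taking `u '' Ici n`, makes the intersection empty
even when `u` repeats values. -/
def rangeDiffInitial (u : ℕ → α) (n : ℕ) : Set α :=
  range u \ u '' Iio n

theorem rangeDiffInitial_succ_subset (u : ℕ → α) (n : ℕ) :
    rangeDiffInitial u (n + 1) ⊆ rangeDiffInitial u n :=
  sdiff_subset_sdiff_right (image_mono (Iio_subset_Iio n.le_succ))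

theorem iInter_rangeDiffInitial (u : ℕ → α) : ⋂ n, rangeDiffInitial u n = ∅ := by
  refine eq_empty_of_forall_notMem fun x hx => ?_
  obtain ⟨⟨k, rfl⟩, -⟩ := mem_iInter.1 hx 0
  exact (mem_iInter.1 hx (k + 1)).2 ⟨k, Nat.lt_succ_self k, rfl⟩

theorem _root_.DenseRange.dense_rangeDiffInitial [TopologicalSpace α] [T1Space α]
    [∀ x : α, NeBot (𝓝[≠] x)] {u : ℕ → α} (hu : DenseRange u) (n : ℕ) :
    Dense (rangeDiffInitial u n) :=
  hu.sdiff_finite ((finite_Iio n).image u)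

end Set

theorem not_isDeltaSpace_of_denseRange {X : Type*} [TopologicalSpace X] [BaireSpace X]
    [T1Space X] [∀ x : X, NeBot (𝓝[≠] x)] [Nonempty X] {u : ℕ → X} (hu : DenseRange u) :
    ¬ IsDeltaSpace X := by
  intro hX
  obtain ⟨V, hV_open, -, hV_inter, hDV⟩ :=
    hX _ (rangeDiffInitial_succ_subset u) (iInter_rangeDiffInitial u)
  have hV_dense : ∀ n, Dense (V n) := fun n => (hu.dense_rangeDiffInitial n).mono (hDV n)
  have h_empty_dense : Dense (∅ : Set X) := hV_inter ▸ dense_iInter_of_isOpen hV_open hV_dense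
  exact h_empty_dense.nonempty.ne_empty rfl

theorem not_isDeltaSpace_of_separableSpace {X : Type*} [TopologicalSpace X] [BaireSpace X]
    [T1Space X] [∀ x : X, NeBot (𝓝[≠] x)] [Nonempty X] [TopologicalSpace.SeparableSpace X] :
    ¬ IsDeltaSpace X :=
  not_isDeltaSpace_of_denseRange (TopologicalSpace.denseRange_denseSeq X)

theorem unitInterval_not_isDeltaSpace : ¬ IsDeltaSpace (Set.Icc (0 : ℝ) 1) :=
  not_isDeltaSpace_of_separableSpace
end

section
/- If f : X → Y is a closed continuous surjection and X is a Δ-space, then Y is a Δ-space. -/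
theorem isDeltaSpace_of_closed_continuous_surjection {X Y : Type*} [TopologicalSpace X]
    [TopologicalSpace Y] (f : X → Y) (hcont : Continuous f) (hclosed : IsClosedMap f)
    (hsurj : Function.Surjective f) (hX : IsDeltaSpace X) : IsDeltaSpace Y := by
  intro D hdec hempty
  obtain ⟨V, hVopen, hVdec, hVempty, hVsub⟩ :=
    hX (fun n => f ⁻¹' (D n)) (fun n => Set.preimage_mono (hdec n))
      (by rw [← Set.preimage_iInter, hempty, Set.preimage_empty])
  refine ⟨fun n => (f '' (V n)ᶜ)ᶜ, fun n => ?_, fun n => ?_, ?_, fun n y hy hyim => ?_⟩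
  · exact (hclosed _ (hVopen n).isClosed_compl).isOpen_compl
  · exact Set.compl_subset_compl.2 (Set.image_mono (Set.compl_subset_compl.2 (hVdec n)))
  · ext y
    simp only [Set.mem_iInter, Set.mem_compl_iff, Set.mem_empty_iff_false, iff_false, not_forall,
      not_not]
    obtain ⟨x, rfl⟩ := hsurj y
    by_contra h
    push_neg at h
    have hx : x ∈ ⋂ n, V n := Set.mem_iInter.2 fun n => by
      by_contra hxn
      exact h n ⟨x, hxn, rfl⟩
    simp [hVempty] at hx
  · obtain ⟨x, hx, rfl⟩ := hyim
    exact hx (hVsub n hy)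
end

section
/- The ordinal space [0, ω₁] (all ordinals ≤ ω₁ with the order topology) is not a Δ-space. -/
open Ordinal

/-!
Ulam's matrix splits `ω₁` into countably many disjoint stationary sets `S k`; put
`D n = ⋃ k ≥ n, S k`, so `⋂ n, D n = ∅`. If `V n ⊇ D n` is open, each `x ∈ D n` has a left
neighbourhood `(f x, x] ⊆ V n`, and by Fodor's pressing-down argument `f` is constant on a
cofinal part of the stationary set `D n`, so `V n` contains a final segment of `ω₁`. Countably
many final segments of `ω₁` still meet, hence `⋂ n, V n ≠ ∅`.
-/

open Cardinal Function Order Set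

section OmegaOneLike

/- Together with `WellFoundedLT α`, the hypotheses `hα : ℵ₀ < cof α` and
`hIio : ∀ x, (Iio x).Countable` below say that `α` has order type `ω₁`. -/
variable {α : Type*} [LinearOrder α]

theorem exists_forall_lt_of_countable (hα : ℵ₀ < cof α) {s : Set α} (hs : s.Countable) :
    ∃ x, ∀ y ∈ s, y < x :=
  not_isCofinal_iff.1 fun h => ((cof_le h).trans (le_aleph0_iff_set_countable.2 hs)).not_gt hα

theorem isStationary_Ioi (hα : ℵ₀ < cof α) (x : α) : IsStationary (Ioi x) := by
  refine IsStationary.of_not_isCofinal_compl (not_isCofinal_iff.2 ?_)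
  obtain ⟨z, hz⟩ := exists_forall_lt_of_countable hα (countable_singleton x)
  exact ⟨z, fun y hy => (not_lt.1 hy).trans_lt (hz x rfl)⟩

variable [WellFoundedLT α]

theorem isClub_setOf_forall_lt_imp_lt (hα : ℵ₀ < cof α) (hIio : ∀ x : α, (Iio x).Countable)
    (h : α → α) : IsClub {c | ∀ b < c, h b < c} := by
  refine ⟨fun d hd _ _ a ha b hb => ?_, fun a => ?_⟩
  · obtain ⟨c, hcd, hbc⟩ := (lt_isLUB_iff ha).1 hb
    exact (hd hcd b hbc).trans_le (ha.1 hcd)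
  · choose B hB using fun x => exists_forall_lt_of_countable hα ((hIio x).image h)
    let g : ℕ → α := fun n => B^[n] a
    obtain ⟨z, hz⟩ := exists_forall_lt_of_countable hα (countable_range g)
    obtain ⟨c, hc, hcmin⟩ := wellFounded_lt.has_min (upperBounds (range g))
      ⟨z, fun y hy => (hz y hy).le⟩
    have hlub : IsLUB (range g) c := ⟨hc, fun d hd => not_lt.1 (hcmin d hd)⟩
    refine ⟨c, fun b hb => ?_, hc ⟨0, rfl⟩⟩
    obtain ⟨_, ⟨n, rfl⟩, hbn⟩ := (lt_isLUB_iff hlub).1 hb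
    calc h b < g (n + 1) := by
          simpa only [g, Function.iterate_succ_apply'] using hB (g n) _ ⟨b, hbn, rfl⟩
      _ ≤ c := hc ⟨n + 1, rfl⟩

theorem IsStationary.exists_isCofinal_preimage (hα : ℵ₀ < cof α)
    (hIio : ∀ x : α, (Iio x).Countable) {S : Set α} (hS : IsStationary S) {f : α → α}
    (hf : ∀ x ∈ S, f x < x) : ∃ y, IsCofinal (S ∩ f ⁻¹' {y}) := by
  by_contra! hbdd
  choose h hh using fun y => not_isCofinal_iff.1 (hbdd y)
  obtain ⟨x, hxS, hx⟩ := hS (isClub_setOf_forall_lt_imp_lt hα hIio h)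
  exact (hh (f x) x ⟨hxS, rfl⟩).asymm (hx _ (hf x hxS))

theorem exists_pairwise_disjoint_isStationary (hα : ℵ₀ < cof α)
    (hIio : ∀ x : α, (Iio x).Countable) :
    ∃ S : ℕ → Set α, Pairwise (Disjoint on S) ∧ ∀ n, IsStationary (S n) ∧ ∀ x ∈ S n, ¬IsMin x := by
  choose e he using fun x => countable_iff_exists_injOn.1 (hIio x)
  have hcolumn : ∀ y, ∃ n, IsStationary {x | y < x ∧ e x y = n} := fun y => by
    rw [← isStationary_iUnion_iff_of_countable hα.ne']
    exact (isStationary_Ioi hα y).mono fun x hx => mem_iUnion.2 ⟨e x y, hx, rfl⟩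
  choose N hN using hcolumn
  obtain ⟨_, ⟨n, rfl⟩, hn⟩ := isCofinal_of_isCofinal_sUnion (s := range fun n => N ⁻¹' {n})
    (IsCofinal.univ.mono fun y _ => mem_sUnion.2 ⟨_, ⟨N y, rfl⟩, rfl⟩)
    ((le_aleph0_iff_set_countable.2 (countable_range _)).trans_lt hα)
  have hinf : (N ⁻¹' {n}).Infinite := fun hfin => by
    obtain ⟨z, hz⟩ := exists_forall_lt_of_countable hα hfin.countable
    obtain ⟨w, hw, hzw⟩ := hn z
    exact (hz w hw).not_ge hzw
  let b := hinf.natEmbedding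
  refine ⟨fun k => {x | (b k : α) < x ∧ e x (b k) = n}, fun j k hjk => disjoint_left.2 ?_,
    fun k => ⟨?_, fun x hx => not_isMin_iff.2 ⟨_, hx.1⟩⟩⟩
  · rintro x ⟨hjx, hj⟩ ⟨hkx, hk⟩
    exact hjk (b.injective (Subtype.ext (he x hjx hkx (hj.trans hk.symm))))
  · have hk : N (b k) = n := (b k).2
    simpa only [hk] using hN (b k)

theorem exists_antitone_isStationary_iInter_eq_empty (hα : ℵ₀ < cof α)
    (hIio : ∀ x : α, (Iio x).Countable) : ∃ D : ℕ → Set α, Antitone D ∧ ⋂ n, D n = ∅ ∧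
      ∀ n, IsStationary (D n) ∧ ∀ x ∈ D n, ¬IsMin x := by
  obtain ⟨S, hdisj, hS⟩ := exists_pairwise_disjoint_isStationary hα hIio
  refine ⟨fun n => ⋃ k ≥ n, S k, fun m n hmn => biUnion_mono (fun k hk => hmn.trans hk)
    fun _ _ => Subset.rfl, eq_empty_of_forall_notMem fun x hx => ?_, fun n =>
    ⟨(hS n).1.mono (subset_iUnion₂_of_subset n le_rfl Subset.rfl), fun x hx => ?_⟩⟩
  · obtain ⟨j, -, hj⟩ := mem_iUnion₂.1 (mem_iInter.1 hx 0)
    obtain ⟨k, hjk, hk⟩ := mem_iUnion₂.1 (mem_iInter.1 hx (j + 1))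
    exact disjoint_left.1 (hdisj (by omega : j ≠ k)) hj hk
  · obtain ⟨k, -, hk⟩ := mem_iUnion₂.1 hx
    exact (hS k).2 x hk

theorem IsStationary.exists_Ioi_subset_of_isOpen [TopologicalSpace α] [OrderTopology α]
    (hα : ℵ₀ < cof α) (hIio : ∀ x : α, (Iio x).Countable) {S U : Set α} (hS : IsStationary S)
    (hSmin : ∀ x ∈ S, ¬IsMin x) (hU : IsOpen U) (hSU : S ⊆ U) : ∃ y, Ioi y ⊆ U := by
  have hnhds : ∀ x, ∃ l, x ∈ S → l < x ∧ Ioc l x ⊆ U := fun x => by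
    by_cases hx : x ∈ S
    · obtain ⟨l, hl⟩ := exists_Ioc_subset_of_mem_nhds (hU.mem_nhds (hSU hx))
        (not_isMin_iff.1 (hSmin x hx))
      exact ⟨l, fun _ => hl⟩
    · exact ⟨x, fun h => absurd h hx⟩
  choose f hf using hnhds
  obtain ⟨y, hy⟩ := hS.exists_isCofinal_preimage hα hIio fun x hx => (hf x hx).1
  refine ⟨y, fun z hz => ?_⟩
  obtain ⟨x, ⟨hxS, rfl⟩, hzx⟩ := hy z
  exact (hf x hxS).2 ⟨hz, hzx⟩

end OmegaOneLike

theorem aleph0_lt_cof_Iio_omega_one : ℵ₀ < cof (Iio (ω₁ : Ordinal.{u})) := by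
  rw [Ordinal.cof_Iio, lift_omega]
  simp

theorem countable_Iio_of_lt_omega_one {o : Ordinal.{u}} (ho : o < ω₁) : (Iio o).Countable := by
  rwa [← le_aleph0_iff_set_countable, Cardinal.mk_Iio_ordinal, ← lift_aleph0.{u + 1, u},
    Cardinal.lift_le, ← Order.lt_succ_iff, succ_aleph0, ← lt_ord, ord_aleph]

theorem countable_Iio_Iio_omega_one (x : Iio (ω₁ : Ordinal.{u})) : (Iio x).Countable :=
  (countable_Iio_of_lt_omega_one x.2).preimage Subtype.val_injective

theorem ordinalSpace_omega1_not_isDeltaSpace :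
    ¬ IsDeltaSpace (Set.Iic (ω_ 1)) := by
  intro hΔ
  let ι : Iio (ω₁ : Ordinal) → Iic (ω₁ : Ordinal) := inclusion Iio_subset_Iic_self
  have hα := aleph0_lt_cof_Iio_omega_one
  obtain ⟨D, hDanti, hDempty, hD⟩ :=
    exists_antitone_isStationary_iInter_eq_empty hα countable_Iio_Iio_omega_one
  obtain ⟨V, hVopen, -, hVempty, hDV⟩ := hΔ (fun n => ι '' D n)
    (fun n => image_mono (hDanti n.le_succ))
    (by rw [← (inclusion_injective _).injOn.image_iInter_eq, hDempty, image_empty])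
  choose y hy using fun n => (hD n).1.exists_Ioi_subset_of_isOpen hα countable_Iio_Iio_omega_one
    (hD n).2 ((hVopen n).preimage (continuous_inclusion _)) (image_subset_iff.1 (hDV n))
  obtain ⟨z, hz⟩ := exists_forall_lt_of_countable hα (countable_range y)
  exact hVempty.subset (mem_iInter.2 fun n => hy n (hz _ ⟨n, rfl⟩))
end

section
/- A compact metrizable space is a Δ-space if and only if it is countable. -/
/-!
A countable T1 space is a Δ-space: enumerate its points and let `V n` be the complement of the
finitely many points among the first `n` that have already left `D n`. Conversely, a Baire space
without isolated points and with a countable dense set `Q` is not a Δ-space: removing the points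
of `Q` one at a time gives a decreasing sequence with empty intersection, and any open sets
containing its terms are dense, so their intersection is nonempty. The Cantor space is such a
space, and an uncountable compact metrizable space contains a copy of it.
-/

open Set Filter Topology TopologicalSpace

lemma IsDeltaSpace.of_continuous_injective {X Y : Type*} [TopologicalSpace X]
    [TopologicalSpace Y] (hX : IsDeltaSpace X) (g : Y → X) (hc : Continuous g)
    (hg : Function.Injective g) : IsDeltaSpace Y := by
  intro D hD hDempty
  obtain ⟨V, hVopen, hV, hVempty, hDV⟩ := hX (fun n => g '' D n)
    (fun n => image_mono (hD n))
    (by rw [← hg.injOn.image_iInter_eq, hDempty, image_empty])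
  refine ⟨fun n => g ⁻¹' V n, fun n => (hVopen n).preimage hc, fun n => preimage_mono (hV n),
    by rw [← preimage_iInter, hVempty, preimage_empty],
    fun n => image_subset_iff.mp (hDV n)⟩

lemma isDeltaSpace_of_countable {X : Type*} [TopologicalSpace X] [T1Space X] [Countable X] :
    IsDeltaSpace X := by
  intro D hD hDempty
  obtain ⟨e, he⟩ := Countable.exists_injective_nat X
  let F : ℕ → Set X := fun n => {x | e x ≤ n} \ D n
  have hF_closed : ∀ n, IsClosed (F n) := fun n =>
    ((finite_Iic n).preimage he.injOn |>.subset sdiff_subset).isClosed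
  have hF_mono : ∀ n, F n ⊆ F (n + 1) := fun n =>
    sdiff_subset_sdiff (fun x (hx : e x ≤ n) => Nat.le_succ_of_le hx) (hD n)
  have hF_cover : ∀ x, ∃ n, x ∈ F n := by
    intro x
    obtain ⟨m, hm⟩ : ∃ m, x ∉ D m := by
      simpa only [mem_iInter, not_forall] using (eq_empty_iff_forall_notMem.mp hDempty x)
    refine ⟨max (e x) m, show e x ≤ _ from le_max_left _ _, fun hx => hm ?_⟩
    exact antitone_nat_of_succ_le hD (le_max_right _ _) hx
  refine ⟨fun n => (F n)ᶜ, fun n => (hF_closed n).isOpen_compl,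
    fun n => compl_subset_compl.mpr (hF_mono n), ?_, fun n x hx hxF => hxF.2 hx⟩
  rw [← compl_iUnion, compl_empty_iff, eq_univ_iff_forall]
  exact fun x => mem_iUnion.mpr (hF_cover x)

instance Pi.perfectSpace {ι : Type*} [Infinite ι] {Y : ι → Type*} [∀ i, TopologicalSpace (Y i)]
    [∀ i, Nontrivial (Y i)] : PerfectSpace (∀ i, Y i) := by
  classical
  refine perfectSpace_iff_forall_not_isolated.mpr fun x => ?_
  choose y hy using fun i => exists_ne (x i)
  have hlim : Tendsto (fun i => Function.update x i (y i)) cofinite (𝓝[≠] x) := by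
    refine tendsto_nhdsWithin_of_tendsto_nhds_of_eventually_within _ ?_
      (Eventually.of_forall fun i h => hy i (by simpa using congrFun h i))
    refine tendsto_pi_nhds.mpr fun j => tendsto_const_nhds.congr' ?_
    filter_upwards [(finite_singleton j).eventually_cofinite_notMem] with i hi
    exact (Function.update_of_ne (Ne.symm hi) _ _).symm
  exact hlim.neBot

lemma not_isDeltaSpace_of_perfectSpace {X : Type*} [TopologicalSpace X] [BaireSpace X]
    [SeparableSpace X] [T1Space X] [PerfectSpace X] [Nonempty X] : ¬ IsDeltaSpace X := by
  intro hX
  obtain ⟨u, hu⟩ := exists_dense_seq X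
  obtain ⟨V, hVopen, -, hVempty, hDV⟩ := hX (fun n => range u \ u '' Iio n)
    (fun n => sdiff_subset_sdiff_right (image_mono (Iio_subset_Iio n.le_succ)))
    (eq_empty_iff_forall_notMem.mpr fun x hx => by
      obtain ⟨k, rfl⟩ := (mem_iInter.mp hx 0).1
      exact (mem_iInter.mp hx (k + 1)).2 ⟨k, k.lt_succ_self, rfl⟩)
  have hVdense : ∀ n, Dense (V n) := fun n =>
    (hu.sdiff_finite ((finite_Iio n).image u)).mono (hDV n)
  exact (dense_iInter_of_isOpen hVopen hVdense).nonempty.ne_empty hVempty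

theorem compact_metrizable_isDeltaSpace_iff_countable (X : Type*) [TopologicalSpace X]
    [CompactSpace X] [TopologicalSpace.MetrizableSpace X] :
    IsDeltaSpace X ↔ Countable X := by
  let := metrizableSpaceMetric X
  refine ⟨fun hX => ?_, fun _ => isDeltaSpace_of_countable⟩
  by_contra hX_uncountable
  obtain ⟨g, -, hg_cont, hg_inj⟩ := isClosed_univ.exists_nat_bool_injection_of_not_countable
    (by rwa [countable_univ_iff])
  exact not_isDeltaSpace_of_perfectSpace (hX.of_continuous_injective g hg_cont hg_inj)
end
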